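/- arXiv:1403.0259 — 2 statements merged into one kernel-verified Lean document; each statement's English description precedes it below -/
import Mathlib

section
/- Let 0 < r < 1 and 0 < p < 1. Then lim_{n→∞} (1/n)·log( C(n,⌈rn⌉)·p^{⌈rn⌉}·(1-p)^{n-⌈rn⌉} ) = -D(r‖p), where D(r‖p) = r·log(r/p) + (1-r)·log((1-r)/(1-p)) is the binary information divergence. -/
/-!
Stirling's formula in the crude form `log m! = m log m - m + o(m)` gives
`log C(n, k) = n H(k/n) + o(n)` whenever `k` and `n - k` tend to infinity, `H` being the binary
entropy (in nats). Hence the logarithm of the binomial mass at `k` is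
`n (H(k/n) + (k/n) log p + (1 - k/n) log (1 - p)) + o(n)`; the bracket is continuous in `k/n`,
and at `k/n = r` it equals `-D(r‖p)`.
-/

open Filter Real Asymptotics Topology
open scoped Nat

noncomputable def logFactorialRemainder (m : ℕ) : ℝ := log m ! - (m * log m - m)

lemma logFactorialRemainder_eq (m : ℕ) :
    logFactorialRemainder m = log (Stirling.stirlingSeq m) + 1 / 2 * log (2 * m) := by
  rw [logFactorialRemainder, Stirling.log_stirlingSeq_formula]
  rcases eq_or_ne m 0 with rfl | hm
  · simp
  · rw [log_div (by positivity) (exp_ne_zero 1), log_exp]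
    ring

lemma isLittleO_logFactorialRemainder :
    logFactorialRemainder =o[atTop] (fun m : ℕ => (m : ℝ)) := by
  have hStirling : (fun m => log (Stirling.stirlingSeq m)) =o[atTop] (fun m : ℕ => (m : ℝ)) :=
    ((continuousAt_log (by positivity)).tendsto.comp
      Stirling.tendsto_stirlingSeq_sqrt_pi).isBigO_one ℝ |>.trans_isLittleO
      ((isLittleO_one_left_iff ℝ).2 (tendsto_norm_atTop_atTop.comp tendsto_natCast_atTop_atTop))
  have hLog : (fun m : ℕ => 1 / 2 * log (2 * m)) =o[atTop] (fun m : ℕ => (m : ℝ)) := by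
    refine IsLittleO.const_mul_left ?_ _
    refine (isLittleO_log_id_atTop.comp_tendsto
      (tendsto_natCast_atTop_atTop.const_mul_atTop two_pos)).trans_isBigO ?_
    exact (isBigO_refl (fun m : ℕ => (m : ℝ)) atTop).const_mul_left 2
  simpa only [funext logFactorialRemainder_eq] using hStirling.add hLog

lemma Asymptotics.IsLittleO.comp_tendsto_of_le {E : Type*} [Norm E] {f : ℕ → E}
    (hf : f =o[atTop] (fun m : ℕ => (m : ℝ))) {k : ℕ → ℕ} (hk : Tendsto k atTop atTop)
    (hkn : ∀ᶠ n in atTop, k n ≤ n) :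
    (fun n => f (k n)) =o[atTop] (fun n : ℕ => (n : ℝ)) :=
  (hf.comp_tendsto hk).trans_isBigO <| IsBigO.of_bound' <| hkn.mono fun n hn => by
    simpa using hn

lemma mul_log_div_eq {x y : ℝ} (hy : y ≠ 0) : x * log (x / y) = x * log x - x * log y := by
  rcases eq_or_ne x 0 with rfl | hx
  · simp
  · rw [log_div hx hy, mul_sub]

lemma natCast_mul_binEntropy_div {n k : ℕ} (hk : k ≤ n) :
    (n : ℝ) * binEntropy (k / n) = n * log n - k * log k - (n - k : ℕ) * log (n - k : ℕ) := by
  rcases eq_or_ne n 0 with rfl | hn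
  · obtain rfl : k = 0 := by omega
    simp
  have hn' : (n : ℝ) ≠ 0 := by exact_mod_cast hn
  have hsub : 1 - (k : ℝ) / n = (n - k : ℕ) / n := by
    rw [Nat.cast_sub hk]; field_simp
  have hscaled (a : ℝ) : (n : ℝ) * negMulLog (a / n) = a * log n - a * log a := by
    calc (n : ℝ) * negMulLog (a / n) = -(a * log (a / n)) := by rw [negMulLog]; field_simp
      _ = a * log n - a * log a := by rw [mul_log_div_eq hn']; ring
  rw [binEntropy_eq_negMulLog_add_negMulLog_one_sub, hsub, mul_add, hscaled, hscaled,
    Nat.cast_sub hk]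
  ring

lemma log_choose_eq {n k : ℕ} (hk : k ≤ n) :
    log (n.choose k) = n * binEntropy (k / n) +
      (logFactorialRemainder n - logFactorialRemainder k - logFactorialRemainder (n - k)) := by
  have hfac : (n.choose k : ℝ) * k ! * (n - k)! = n ! := by
    exact_mod_cast Nat.choose_mul_factorial_mul_factorial hk
  have hlog : log (n.choose k) = log n ! - log k ! - log (n - k)! := by
    have hchoose : (n.choose k : ℝ) ≠ 0 := by exact_mod_cast (Nat.choose_pos hk).ne'
    rw [← hfac, log_mul (mul_ne_zero hchoose (by positivity)) (by positivity),
      log_mul hchoose (by positivity)]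
    ring
  rw [hlog, natCast_mul_binEntropy_div hk, logFactorialRemainder, logFactorialRemainder,
    logFactorialRemainder, Nat.cast_sub hk]
  ring

theorem isLittleO_log_choose_sub_mul_binEntropy {k : ℕ → ℕ} (hk : Tendsto k atTop atTop)
    (hnk : Tendsto (fun n => n - k n) atTop atTop) (hkn : ∀ᶠ n in atTop, k n ≤ n) :
    (fun n : ℕ => log (n.choose (k n)) - n * binEntropy (k n / n)) =o[atTop]
      (fun n : ℕ => (n : ℝ)) := by
  have hR := isLittleO_logFactorialRemainder
  refine ((hR.sub (hR.comp_tendsto_of_le hk hkn)).sub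
    (hR.comp_tendsto_of_le hnk (.of_forall fun n => n.sub_le (k n)))).congr' ?_ .rfl
  filter_upwards [hkn] with n hn
  rw [log_choose_eq hn]
  ring

section RatioLimit

variable {k : ℕ → ℕ} {r : ℝ}

lemma tendsto_atTop_of_tendsto_div_natCast
    (hk : Tendsto (fun n : ℕ => (k n : ℝ) / n) atTop (𝓝 r)) (hr : 0 < r) :
    Tendsto k atTop atTop :=
  tendsto_natCast_atTop_iff.mp (tendsto_natCast_atTop_atTop.num hr hk)

lemma eventually_le_of_tendsto_div_natCast
    (hk : Tendsto (fun n : ℕ => (k n : ℝ) / n) atTop (𝓝 r)) (hr : r < 1) :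
    ∀ᶠ n in atTop, k n ≤ n := by
  filter_upwards [hk.eventually (gt_mem_nhds hr), eventually_gt_atTop 0] with n h hn
  exact_mod_cast ((div_lt_one (by positivity)).1 h).le

lemma tendsto_sub_div_natCast
    (hk : Tendsto (fun n : ℕ => (k n : ℝ) / n) atTop (𝓝 r)) (hr : r < 1) :
    Tendsto (fun n : ℕ => ((n - k n : ℕ) : ℝ) / n) atTop (𝓝 (1 - r)) := by
  refine (tendsto_const_nhds.sub hk).congr' ?_
  filter_upwards [eventually_le_of_tendsto_div_natCast hk hr, eventually_gt_atTop 0] with n h hn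
  rw [Nat.cast_sub h]
  field_simp

end RatioLimit

lemma log_choose_mul_pow_mul_pow {p : ℝ} (hp0 : p ≠ 0) (hp1 : p ≠ 1) {n k : ℕ}
    (hk : k ≤ n) :
    log (n.choose k * p ^ k * (1 - p) ^ (n - k)) =
      log (n.choose k) + k * log p + (n - k : ℕ) * log (1 - p) := by
  have hchoose : (n.choose k : ℝ) ≠ 0 := by exact_mod_cast (Nat.choose_pos hk).ne'
  have hq : 1 - p ≠ 0 := sub_ne_zero.2 hp1.symm
  rw [log_mul (mul_ne_zero hchoose (pow_ne_zero _ hp0)) (pow_ne_zero _ hq),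
    log_mul hchoose (pow_ne_zero _ hp0), log_pow, log_pow]

lemma binEntropy_add_mul_log_add_mul_log {p : ℝ} (hp0 : p ≠ 0) (hp1 : p ≠ 1) (r : ℝ) :
    binEntropy r + r * log p + (1 - r) * log (1 - p) =
      -(r * log (r / p) + (1 - r) * log ((1 - r) / (1 - p))) := by
  rw [mul_log_div_eq hp0, mul_log_div_eq (sub_ne_zero.2 hp1.symm),
    binEntropy_eq_negMulLog_add_negMulLog_one_sub, negMulLog, negMulLog]
  ring

theorem tendsto_log_binomial_pmf_div {p r : ℝ} (hr0 : 0 < r) (hr1 : r < 1) (hp0 : p ≠ 0)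
    (hp1 : p ≠ 1) {k : ℕ → ℕ}
    (hk : Tendsto (fun n : ℕ => (k n : ℝ) / n) atTop (𝓝 r)) :
    Tendsto (fun n : ℕ => log (n.choose (k n) * p ^ k n * (1 - p) ^ (n - k n)) / n) atTop
      (𝓝 (-(r * log (r / p) + (1 - r) * log ((1 - r) / (1 - p))))) := by
  have hkn := eventually_le_of_tendsto_div_natCast hk hr1
  have hchoose := isLittleO_log_choose_sub_mul_binEntropy
    (tendsto_atTop_of_tendsto_div_natCast hk hr0)
    (tendsto_atTop_of_tendsto_div_natCast (tendsto_sub_div_natCast hk hr1) (by linarith)) hkn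
  have hg := ((by fun_prop : Continuous fun x => binEntropy x + x * log p + (1 - x) * log (1 - p))
    |>.tendsto r).comp hk
  rw [← binEntropy_add_mul_log_add_mul_log hp0 hp1, ← zero_add (_ + (1 - r) * log (1 - p))]
  refine (hchoose.tendsto_div_nhds_zero.add hg).congr' ?_
  filter_upwards [hkn, eventually_ne_atTop 0] with n hkn hn
  rw [Function.comp_apply, log_choose_mul_pow_mul_pow hp0 hp1 hkn, Nat.cast_sub hkn]
  field_simp
  ring

theorem binomial_pmf_exponent (p r : ℝ) (hr0 : 0 < r) (hr1 : r < 1) (hp0 : 0 < p) (hp1 : p < 1) :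
    Filter.Tendsto
      (fun n : ℕ =>
        (1 / (n : ℝ)) *
          Real.log ((n.choose ⌈r * (n : ℝ)⌉₊ : ℝ) * p ^ ⌈r * (n : ℝ)⌉₊ *
            (1 - p) ^ (n - ⌈r * (n : ℝ)⌉₊)))
      Filter.atTop
      (nhds (-(r * Real.log (r / p) + (1 - r) * Real.log ((1 - r) / (1 - p))))) := by
  simpa only [one_div_mul_eq_div] using tendsto_log_binomial_pmf_div hr0 hr1 hp0.ne' hp1.ne
    ((tendsto_nat_ceil_mul_div_atTop hr0.le).comp tendsto_natCast_atTop_atTop)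
end

section
/- Let 0 < p < 1 and define τ1 = (1-(1-p)^3)/3, λ1 = -log(1-p), τ2 = 2p(2-p)/3, λ2 = -(2/3)·log(1-p), τ3 = (3p-p^3)/3, λ3 = -(1/3)·log((1-p)^2·(1+p)). Then (λ1-λ2)·(τ1-τ3) ≥ (λ1-λ3)·(τ1-τ2). -/
/-! With `L = -log (1 - p)` and `M = log (1 + p)` one has `λ1 - λ2 = L / 3` and `λ1 - λ3 = (L + M) / 3`,
while `τ1 - τ3 = -p² (3 - 2p) / 3` and `τ1 - τ2 = -p (1 + p - p²) / 3`. The difference of the two sides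
is then `p / 9 · (L (1 - p)² + M (1 + p - p²))`, a sum of nonnegative terms for `0 < p < 1`. -/

open Real

lemma log_sq_mul_of_lt_one {p : ℝ} (hp0 : 0 < p) (hp1 : p < 1) :
    log ((1 - p) ^ 2 * (1 + p)) = 2 * log (1 - p) + log (1 + p) := by
  rw [log_mul (by nlinarith) (by linarith), log_pow]
  push_cast
  ring

lemma slope_gap_eq (p a b : ℝ) :
    ((-a) - (-(2 / 3) * a)) * ((1 - (1 - p) ^ 3) / 3 - (3 * p - p ^ 3) / 3) -
        ((-a) - (-(1 / 3) * (2 * a + b))) * ((1 - (1 - p) ^ 3) / 3 - 2 * p * (2 - p) / 3) =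
      p / 9 * ((-a) * (1 - p) ^ 2 + b * (1 + p * (1 - p))) := by
  ring

theorem slope_comparison_d3 (p : ℝ) (hp0 : 0 < p) (hp1 : p < 1) :
    ((-Real.log (1 - p)) - (-(2 / 3) * Real.log (1 - p))) *
        ((1 - (1 - p) ^ 3) / 3 - (3 * p - p ^ 3) / 3) ≥
      ((-Real.log (1 - p)) - (-(1 / 3) * Real.log ((1 - p) ^ 2 * (1 + p)))) *
        ((1 - (1 - p) ^ 3) / 3 - 2 * p * (2 - p) / 3) := by
  rw [ge_iff_le, ← sub_nonneg, log_sq_mul_of_lt_one hp0 hp1, slope_gap_eq]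
  have hL : 0 ≤ -log (1 - p) := neg_nonneg.mpr (log_nonpos (by linarith) (by linarith))
  have hM : 0 ≤ log (1 + p) := log_nonneg (by linarith)
  have hq : 0 ≤ 1 + p * (1 - p) := by nlinarith
  positivity
end
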